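/- arXiv:1908.04948 — 3 statements merged into one kernel-verified Lean document; each statement's English description precedes it below -/
import Mathlib

section
/- Let 0 < α ≤ 1, t₀ ≥ 0, a > 0, δ ≥ 0 and c ≥ 0, and let w : [t₀, t₀+a] → ℝ be a continuous nonnegative function. If w(t) ≤ δ + c ∫_{t₀}^t (t−s)^{α−1} w(s) ds for every t ∈ [t₀, t₀+a], then w(t) ≤ δ · E_α( cΓ(α)(t−t₀)^α ) for every t ∈ [t₀, t₀+a]. -/
open Set intervalIntegral

/-- The one-parameter Mittag-Leffler function `E_μ(x) = ∑_{k=0}^∞ xᵏ / Γ(μ k + 1)`. -/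
noncomputable def mittagLeffler (μ x : ℝ) : ℝ :=
  ∑' k : ℕ, x ^ k / Real.Gamma (μ * k + 1)

/-!
Picard iteration. Write `A u (t) = ∫_{t₀}^t (t - s)^(α-1) u(s) ds`. By the Beta integral, `A` maps
`(t - t₀)^(αk) / Γ(αk + 1)` to `Γ(α) (t - t₀)^(α(k+1)) / Γ(α(k+1) + 1)`. Since `A` is linear and
positive, substituting `w ≤ δ + c A w` into itself `n` times gives
`w(t) ≤ δ ∑_{k<n} xᵏ / Γ(αk + 1) + (sup w) xⁿ / Γ(αn + 1)` with `x = c Γ(α) (t - t₀)^α`.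
The Mittag-Leffler series converges because `Γ(αk + 1) ≥ ⌊αk⌋!` outgrows every geometric
sequence, so the remainder tends to `0`.
-/

open Filter MeasureTheory
open scoped Nat

theorem integral_rpow_mul_sub_rpow {u v L : ℝ} (hu : 0 < u) (hv : 0 < v) (hL : 0 < L) :
    ∫ x in 0..L, x ^ (u - 1) * (L - x) ^ (v - 1) =
      Real.Gamma u * Real.Gamma v / Real.Gamma (u + v) * L ^ (u + v - 1) := by
  have hB := Complex.betaIntegral_scaled u v hL
  rw [Complex.betaIntegral_eq_Gamma_mul_div _ _ (by simpa) (by simpa)] at hB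
  apply Complex.ofReal_injective
  rw [← intervalIntegral.integral_ofReal]
  calc _ = ∫ x in 0..L, (x : ℂ) ^ ((u : ℂ) - 1) * ((L : ℂ) - x) ^ ((v : ℂ) - 1) := by
        refine intervalIntegral.integral_congr fun x hx => ?_
        rw [uIcc_of_le hL.le] at hx
        push_cast [Complex.ofReal_cpow hx.1, Complex.ofReal_cpow (sub_nonneg.2 hx.2)]
        rfl
    _ = _ := by
        rw [hB, ← Complex.ofReal_add, Complex.Gamma_ofReal, Complex.Gamma_ofReal,
          Complex.Gamma_ofReal, ← Complex.ofReal_one, ← Complex.ofReal_sub,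
          ← Complex.ofReal_cpow hL.le]
        push_cast
        ring

theorem factorial_floor_le_Gamma_add_one {s : ℝ} (hs : 1 ≤ s) :
    (⌊s⌋₊ ! : ℝ) ≤ Real.Gamma (s + 1) := by
  have hfloor : (1 : ℝ) ≤ ⌊s⌋₊ := by exact_mod_cast Nat.one_le_floor_iff _ |>.2 hs
  rw [← Real.Gamma_nat_eq_factorial]
  exact Real.Gamma_strictMonoOn_Ici.monotoneOn (by simp; linarith) (by simp; linarith)
    (by gcongr; exact Nat.floor_le (by linarith))

theorem eventually_pow_le_Gamma_mul_add_one {α y : ℝ} (hα : 0 < α) (hy : 1 ≤ y) :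
    ∀ᶠ k : ℕ in atTop, y ^ k ≤ Real.Gamma (α * k + 1) := by
  set S := y ^ α⁻¹
  have hS : 1 ≤ S := Real.one_le_rpow hy (by positivity)
  have hfact : ∀ᶠ n : ℕ in atTop, S ^ (n + 1) ≤ n ! := by
    filter_upwards [(FloorSemiring.tendsto_pow_div_factorial_atTop S).const_mul S
      |>.eventually_le_const (show S * 0 < 1 by simp)] with n hn
    rwa [← mul_div_assoc, div_le_one (by positivity), ← pow_succ'] at hn
  have hαk : Tendsto (fun k : ℕ => α * k) atTop atTop :=
    tendsto_natCast_atTop_atTop.const_mul_atTop hα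
  filter_upwards [(tendsto_nat_floor_atTop.comp hαk).eventually hfact,
    hαk.eventually_ge_atTop 1] with k hk hk1
  calc y ^ k = S ^ (α * k) := by
        rw [← Real.rpow_mul (by linarith), inv_mul_cancel_left₀ hα.ne', Real.rpow_natCast]
    _ ≤ S ^ (⌊α * k⌋₊ + 1) := by
        rw [← Real.rpow_natCast]
        exact Real.rpow_le_rpow_of_exponent_le hS (by push_cast; exact (Nat.lt_floor_add_one _).le)
    _ ≤ ⌊α * k⌋₊ ! := hk
    _ ≤ Real.Gamma (α * k + 1) := factorial_floor_le_Gamma_add_one hk1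

theorem summable_pow_div_Gamma_mul_add_one {α : ℝ} (hα : 0 < α) (x : ℝ) :
    Summable fun k : ℕ => x ^ k / Real.Gamma (α * k + 1) := by
  have hy : 0 < 2 * |x| + 1 := by positivity
  refine Summable.of_norm_bounded_eventually_nat (g := fun k => (|x| / (2 * |x| + 1)) ^ k)
    (summable_geometric_of_lt_one (by positivity) ((div_lt_one hy).2 (by linarith [abs_nonneg x])))
    ?_
  filter_upwards [eventually_pow_le_Gamma_mul_add_one hα (y := 2 * |x| + 1)
    (by linarith [abs_nonneg x])] with k hk
  rw [norm_div, norm_pow, Real.norm_eq_abs, Real.norm_eq_abs,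
    abs_of_pos (Real.Gamma_pos_of_pos (by positivity)), div_pow]
  gcongr

noncomputable def fracMonomial (α t₀ : ℝ) (k : ℕ) (t : ℝ) : ℝ :=
  (t - t₀) ^ (α * k) / Real.Gamma (α * k + 1)

/-- `Γ(α)` times the Riemann–Liouville integral of order `α` based at `t₀`. -/
noncomputable def abelIntegral (α t₀ : ℝ) (u : ℝ → ℝ) (t : ℝ) : ℝ :=
  ∫ s in t₀..t, (t - s) ^ (α - 1) * u s

section

variable {α t₀ : ℝ}

@[simp]
theorem fracMonomial_zero (t : ℝ) : fracMonomial α t₀ 0 t = 1 := by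
  simp [fracMonomial]

theorem fracMonomial_self (hα : 0 < α) {k : ℕ} (hk : k ≠ 0) : fracMonomial α t₀ k t₀ = 0 := by
  simp [fracMonomial, Real.zero_rpow (mul_ne_zero hα.ne' (Nat.cast_ne_zero.2 hk))]

theorem continuousOn_fracMonomial (hα : 0 ≤ α) (k : ℕ) :
    ContinuousOn (fracMonomial α t₀ k) (Ici t₀) :=
  ((continuousOn_id.sub continuousOn_const).rpow_const fun _ _ => Or.inr (by positivity)).div_const
    _

theorem pow_mul_fracMonomial (lam : ℝ) (k : ℕ) {t : ℝ} (ht : t₀ ≤ t) :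
    lam ^ k * fracMonomial α t₀ k t = (lam * (t - t₀) ^ α) ^ k / Real.Gamma (α * k + 1) := by
  rw [fracMonomial, mul_pow, ← Real.rpow_natCast ((t - t₀) ^ α), ← Real.rpow_mul (sub_nonneg.2 ht)]
  ring

theorem abelIntegral_fracMonomial (hα : 0 < α) (k : ℕ) {t : ℝ} (ht : t₀ ≤ t) :
    abelIntegral α t₀ (fracMonomial α t₀ k) t = Real.Gamma α * fracMonomial α t₀ (k + 1) t := by
  rcases ht.eq_or_lt with rfl | ht
  · simp [abelIntegral, fracMonomial_self hα]
  have hβ : 0 < α * k + 1 := by positivity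
  have hΓ : Real.Gamma (α * k + 1) ≠ 0 := (Real.Gamma_pos_of_pos hβ).ne'
  have hshift := intervalIntegral.integral_comp_sub_right
    (fun x => x ^ (α * k + 1 - 1) * (t - t₀ - x) ^ (α - 1)) (a := t₀) (b := t) t₀
  simp only [sub_self, sub_sub_sub_cancel_right] at hshift
  rw [integral_rpow_mul_sub_rpow hβ hα (sub_pos.2 ht), add_sub_cancel_right] at hshift
  calc abelIntegral α t₀ (fracMonomial α t₀ k) t
      = (∫ s in t₀..t, (s - t₀) ^ (α * k) * (t - s) ^ (α - 1)) / Real.Gamma (α * k + 1) := by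
        rw [abelIntegral, ← intervalIntegral.integral_div]
        congr 1 with s
        rw [fracMonomial]
        ring
    _ = _ := by
        rw [hshift, fracMonomial, show α * k + 1 + α - 1 = α * ↑(k + 1) by push_cast; ring,
          show α * k + 1 + α = α * ↑(k + 1) + 1 by push_cast; ring]
        field_simp

theorem intervalIntegrable_sub_rpow_mul (hα : 0 < α) {u : ℝ → ℝ} {t : ℝ} (ht : t₀ ≤ t)
    (hu : ContinuousOn u (Icc t₀ t)) :
    IntervalIntegrable (fun s => (t - s) ^ (α - 1) * u s) volume t₀ t := by
  have hkernel : IntervalIntegrable (fun s => (t - s) ^ (α - 1)) volume t₀ t := by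
    simpa using (intervalIntegrable_rpow' (r := α - 1) (a := t - t₀) (b := t - t)
      (by linarith)).comp_sub_left t
  exact hkernel.mul_continuousOn (by rwa [uIcc_of_le ht])

theorem abelIntegral_mono (hα : 0 < α) {u v : ℝ → ℝ} {t : ℝ} (ht : t₀ ≤ t)
    (hu : ContinuousOn u (Icc t₀ t)) (hv : ContinuousOn v (Icc t₀ t))
    (huv : ∀ s ∈ Icc t₀ t, u s ≤ v s) :
    abelIntegral α t₀ u t ≤ abelIntegral α t₀ v t :=
  intervalIntegral.integral_mono_on ht (intervalIntegrable_sub_rpow_mul hα ht hu)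
    (intervalIntegrable_sub_rpow_mul hα ht hv) fun s hs =>
      mul_le_mul_of_nonneg_left (huv s hs) (Real.rpow_nonneg (sub_nonneg.2 hs.2) _)

theorem abelIntegral_add (hα : 0 < α) {u v : ℝ → ℝ} {t : ℝ} (ht : t₀ ≤ t)
    (hu : ContinuousOn u (Icc t₀ t)) (hv : ContinuousOn v (Icc t₀ t)) :
    abelIntegral α t₀ (fun s => u s + v s) t = abelIntegral α t₀ u t + abelIntegral α t₀ v t := by
  simp only [abelIntegral, mul_add]
  exact intervalIntegral.integral_add (intervalIntegrable_sub_rpow_mul hα ht hu)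
    (intervalIntegrable_sub_rpow_mul hα ht hv)

theorem abelIntegral_const_mul (a : ℝ) (u : ℝ → ℝ) (t : ℝ) :
    abelIntegral α t₀ (fun s => a * u s) t = a * abelIntegral α t₀ u t := by
  simp only [abelIntegral, mul_left_comm _ a, intervalIntegral.integral_const_mul]

theorem abelIntegral_finsetSum {ι : Type*} (hα : 0 < α) (S : Finset ι) {u : ι → ℝ → ℝ} {t : ℝ}
    (ht : t₀ ≤ t) (hu : ∀ i ∈ S, ContinuousOn (u i) (Icc t₀ t)) :
    abelIntegral α t₀ (fun s => ∑ i ∈ S, u i s) t = ∑ i ∈ S, abelIntegral α t₀ (u i) t := by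
  simp only [abelIntegral, Finset.mul_sum]
  exact intervalIntegral.integral_finsetSum fun i hi =>
    intervalIntegrable_sub_rpow_mul hα ht (hu i hi)

theorem continuousOn_sum_fracMonomial (hα : 0 ≤ α) (a : ℕ → ℝ) (n : ℕ) :
    ContinuousOn (fun s => ∑ k ∈ Finset.range n, a k * fracMonomial α t₀ k s) (Ici t₀) :=
  continuousOn_finsetSum _ fun k _ => continuousOn_const.mul (continuousOn_fracMonomial hα k)

theorem one_add_mul_abelIntegral_sum_fracMonomial (hα : 0 < α) (c : ℝ) (n : ℕ) {t : ℝ}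
    (ht : t₀ ≤ t) :
    1 + c * abelIntegral α t₀
        (fun s => ∑ k ∈ Finset.range n, (c * Real.Gamma α) ^ k * fracMonomial α t₀ k s) t =
      ∑ k ∈ Finset.range (n + 1), (c * Real.Gamma α) ^ k * fracMonomial α t₀ k t := by
  have hcont : ∀ k ∈ Finset.range n, ContinuousOn
      (fun s => (c * Real.Gamma α) ^ k * fracMonomial α t₀ k s) (Icc t₀ t) := fun k _ =>
    (continuousOn_const.mul (continuousOn_fracMonomial hα.le k)).mono Icc_subset_Ici_self
  rw [abelIntegral_finsetSum hα _ ht hcont, Finset.sum_range_succ', Finset.mul_sum]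
  simp only [abelIntegral_const_mul, abelIntegral_fracMonomial hα _ ht, fracMonomial_zero]
  rw [add_comm]
  congr 1
  · exact Finset.sum_congr rfl fun k _ => by ring
  · ring

theorem le_sum_fracMonomial_add_of_le_add_abelIntegral (hα : 0 < α) {c δ M b : ℝ} (hc : 0 ≤ c)
    {w : ℝ → ℝ} (hw : ContinuousOn w (Icc t₀ b)) (hM : ∀ t ∈ Icc t₀ b, w t ≤ M)
    (hineq : ∀ t ∈ Icc t₀ b, w t ≤ δ + c * abelIntegral α t₀ w t) (n : ℕ) :
    ∀ t ∈ Icc t₀ b, w t ≤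
      δ * ∑ k ∈ Finset.range n, (c * Real.Gamma α) ^ k * fracMonomial α t₀ k t +
        M * ((c * Real.Gamma α) ^ n * fracMonomial α t₀ n t) := by
  induction n with
  | zero => simpa using hM
  | succ n ih =>
    intro t ht
    set lam := c * Real.Gamma α
    have hsub : Icc t₀ t ⊆ Icc t₀ b := Icc_subset_Icc_right ht.2
    have hδsum : ContinuousOn
        (fun s => δ * ∑ k ∈ Finset.range n, lam ^ k * fracMonomial α t₀ k s) (Icc t₀ t) :=
      (continuousOn_const.mul (continuousOn_sum_fracMonomial hα.le _ n)).mono Icc_subset_Ici_self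
    have hMrem : ContinuousOn (fun s => M * (lam ^ n * fracMonomial α t₀ n s)) (Icc t₀ t) :=
      (continuousOn_const.mul (continuousOn_const.mul (continuousOn_fracMonomial hα.le n))).mono
        Icc_subset_Ici_self
    calc w t ≤ δ + c * abelIntegral α t₀ w t := hineq t ht
      _ ≤ δ + c * abelIntegral α t₀ (fun s =>
            δ * ∑ k ∈ Finset.range n, lam ^ k * fracMonomial α t₀ k s +
              M * (lam ^ n * fracMonomial α t₀ n s)) t := by
        gcongr
        exact abelIntegral_mono hα ht.1 (hw.mono hsub) (hδsum.add hMrem)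
          fun s hs => ih s (hsub hs)
      _ = _ := by
        rw [abelIntegral_add hα ht.1 hδsum hMrem, abelIntegral_const_mul, abelIntegral_const_mul,
          abelIntegral_const_mul, abelIntegral_fracMonomial hα n ht.1,
          ← one_add_mul_abelIntegral_sum_fracMonomial hα c n ht.1, pow_succ]
        ring

end

theorem fractional_gronwall_const_general
    (α t₀ a δ c : ℝ) (hα0 : 0 < α) (hc : 0 ≤ c)
    (w : ℝ → ℝ)
    (hw_cont : ContinuousOn w (Icc t₀ (t₀ + a)))
    (hineq : ∀ t ∈ Icc t₀ (t₀ + a),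
      w t ≤ δ + c * ∫ s in t₀..t, (t - s) ^ (α - 1) * w s) :
    ∀ t ∈ Icc t₀ (t₀ + a),
      w t ≤ δ * mittagLeffler α (c * Real.Gamma α * (t - t₀) ^ α) := by
  intro t ht
  obtain ⟨M, hM⟩ := isCompact_Icc.exists_bound_of_continuousOn hw_cont
  have hbound := le_sum_fracMonomial_add_of_le_add_abelIntegral hα0 hc hw_cont
    (fun s hs => (le_abs_self _).trans (hM s hs)) hineq
  have hterm (k : ℕ) := pow_mul_fracMonomial (α := α) (c * Real.Gamma α) k ht.1
  have hsum := summable_pow_div_Gamma_mul_add_one hα0 (c * Real.Gamma α * (t - t₀) ^ α)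
  have hlim :=
    (hsum.hasSum.tendsto_sum_nat.const_mul δ).add (hsum.tendsto_atTop_zero.const_mul M)
  rw [mul_zero, add_zero] at hlim
  exact ge_of_tendsto' hlim fun n => by simpa only [hterm] using hbound n t ht

/-- Gronwall lemma for the fractional integral with kernel `(t - s)^(α-1)`:
if `w` is continuous and nonnegative on `J = [t₀, t₀ + a]` and
`w(t) ≤ δ + c ∫_{t₀}^t (t - s)^(α-1) w(s) ds` on `J`, then
`w(t) ≤ δ · E_α(c Γ(α) (t - t₀)^α)` on `J`. -/
theorem fractional_gronwall_const
    (α t₀ a δ c : ℝ) (hα0 : 0 < α) (hα1 : α ≤ 1) (ht₀ : 0 ≤ t₀) (ha : 0 < a)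
    (hδ : 0 ≤ δ) (hc : 0 ≤ c)
    (w : ℝ → ℝ)
    (hw_cont : ContinuousOn w (Icc t₀ (t₀ + a)))
    (hw_nonneg : ∀ t ∈ Icc t₀ (t₀ + a), 0 ≤ w t)
    (hineq : ∀ t ∈ Icc t₀ (t₀ + a),
      w t ≤ δ + c * ∫ s in t₀..t, (t - s) ^ (α - 1) * w s) :
    ∀ t ∈ Icc t₀ (t₀ + a),
      w t ≤ δ * mittagLeffler α (c * Real.Gamma α * (t - t₀) ^ α) :=
  fractional_gronwall_const_general α t₀ a δ c hα0 hc w hw_cont hineq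
end

section
/- With the data of the nonlocal fractional evolution setup, assume in addition that q̃ := (r+1)·L·M·a·(1 + M‖B‖·C̃·Σ_{k=1}^p |C_k|) < 1, where C̃ = a^{1−γ}/Γ(2−γ). Then there exists exactly one continuous function u : J → Ω satisfying the mild-solution integral equation u(t) = S(t−t₀)Bu₀ + ∫_{t₀}^t K(t−s) f(s,u(s),u(b₁(s)),…,u(b_r(s))) ds − S(t−t₀) B Σ_{k=1}^p C_k (I_{t₀⁺}^{1−γ} h_u)(t_k) for all t ∈ J; i.e., the nonlocal fractional evolution problem has a unique mild solution. -/
/-!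
The right-hand side `Fop … ω` of the integral equation is a contraction of `C(J, Ω)` with
constant `q̃`: the nonlinearity contributes `(r + 1) L`, the convolution with `K` a factor `M a`,
and the nonlocal term a further `M ‖B‖ ∑ |C_k|` times the bound `a ^ (1 - γ) / Γ(2 - γ)` of the
fractional integral `I^{1-γ} 1` on `J`. Banach's fixed-point theorem then gives existence and
uniqueness. To have globally continuous integrands, `S`, `K` and the `b_i` are first extended
constantly outside `[0, a]` and `J`; this does not change the operator on `J`.
-/

open Set intervalIntegral

/-- The Riemann–Liouville fractional integral
`(I_{t₀⁺}^δ g)(t) = (1/Γ(δ)) ∫_{t₀}^t (t-s)^(δ-1) g(s) ds` (Bochner integral). -/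
noncomputable def fracInt {Ω : Type*} [NormedAddCommGroup Ω] [NormedSpace ℝ Ω]
    (δ t₀ : ℝ) (g : ℝ → Ω) (t : ℝ) : Ω :=
  (1 / Real.Gamma δ) • ∫ s in t₀..t, ((t - s) ^ (δ - 1)) • g s

/-- The tuple `(ω(s), ω(b₁(s)), …, ω(b_r(s)))` fed into the nonlinearity `f`. -/
noncomputable def fArgs {Ω : Type*} {r : ℕ} (b : Fin r → ℝ → ℝ) (ω : ℝ → Ω) (s : ℝ) :
    Fin (r + 1) → Ω :=
  Fin.cons (ω s) fun i => ω (b i s)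

/-- `h_ω(τ) = ∫_{t₀}^τ K(τ - s) f(s, ω(s), ω(b₁(s)), …, ω(b_r(s))) ds`. -/
noncomputable def convMap {Ω : Type*} [NormedAddCommGroup Ω] [NormedSpace ℝ Ω] {r : ℕ}
    (K : ℝ → Ω →L[ℝ] Ω) (t₀ : ℝ) (f : ℝ → (Fin (r + 1) → Ω) → Ω)
    (b : Fin r → ℝ → ℝ) (ω : ℝ → Ω) (τ : ℝ) : Ω :=
  ∫ s in t₀..τ, (K (τ - s)) (f s (fArgs b ω s))

/-- The solution operator
`(Fω)(t) = S(t-t₀) B u₀ + ∫_{t₀}^t K(t-s) f(s, ω(s), ω(b₁(s)), …, ω(b_r(s))) ds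
  - S(t-t₀) B ∑_{k=1}^p C_k (I_{t₀⁺}^{1-γ} h_ω)(t_k)`. -/
noncomputable def Fop {Ω : Type*} [NormedAddCommGroup Ω] [NormedSpace ℝ Ω] {r p : ℕ}
    (S K : ℝ → Ω →L[ℝ] Ω) (t₀ γ : ℝ) (B : Ω →L[ℝ] Ω) (u₀ : Ω)
    (tk : Fin p → ℝ) (Ck : Fin p → ℝ) (f : ℝ → (Fin (r + 1) → Ω) → Ω)
    (b : Fin r → ℝ → ℝ) (ω : ℝ → Ω) (t : ℝ) : Ω :=
  S (t - t₀) (B u₀) + convMap K t₀ f b ω t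
    - S (t - t₀) (B (∑ k, Ck k • fracInt (1 - γ) t₀ (convMap K t₀ f b ω) (tk k)))

open MeasureTheory Filter Topology

theorem integral_rpow_comp_sub_left {δ t₀ t : ℝ} (hδ : 0 < δ) :
    ∫ s in t₀..t, (t - s) ^ (δ - 1) = (t - t₀) ^ δ / δ := by
  rw [integral_comp_sub_left (fun x => x ^ (δ - 1)) t, sub_self,
    integral_rpow (Or.inl (by linarith)), sub_add_cancel, Real.zero_rpow hδ.ne', sub_zero]

theorem intervalIntegrable_rpow_comp_sub_left {δ t₀ t : ℝ} (hδ : 0 < δ) :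
    IntervalIntegrable (fun s => (t - s) ^ (δ - 1)) volume t₀ t := by
  simpa using (intervalIntegrable_rpow' (a := t - t₀) (b := 0) (by linarith)).comp_sub_left t

theorem continuous_clm_apply_of_norm_le {𝕜 X E F : Type*} [NontriviallyNormedField 𝕜]
    [NormedAddCommGroup E] [NormedSpace 𝕜 E] [NormedAddCommGroup F] [NormedSpace 𝕜 F]
    [TopologicalSpace X] {K : X → E →L[𝕜] F} {M : ℝ}
    (hK : ∀ x, Continuous fun t => K t x) (hKb : ∀ t, ‖K t‖ ≤ M) :
    Continuous fun q : X × E => K q.1 q.2 := by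
  refine continuous_iff_continuousAt.2 fun ⟨t, x⟩ => ?_
  have hsmall : Tendsto (fun q : X × E => K q.1 (q.2 - x)) (𝓝 (t, x)) (𝓝 0) := by
    refine squeeze_zero_norm (fun q => (K q.1).le_of_opNorm_le (hKb q.1) _) ?_
    have h : Continuous fun q : X × E => M * ‖q.2 - x‖ := by fun_prop
    simpa using h.tendsto (t, x)
  simpa [ContinuousAt] using hsmall.add ((hK x).continuousAt.comp continuousAt_fst)

theorem eqOn_IccExtend_domRestrict {β : Type*} {a b : ℝ} (h : a ≤ b) (g : ℝ → β) :
    EqOn (IccExtend h (domRestrict (Icc a b) g)) g (Icc a b) :=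
  fun _ hx => IccExtend_of_mem h _ hx

theorem ContinuousOn.continuous_IccExtend_domRestrict {β : Type*} [TopologicalSpace β] {a b : ℝ}
    (h : a ≤ b) {g : ℝ → β} (hg : ContinuousOn g (Icc a b)) :
    Continuous (IccExtend h (Set.domRestrict (Icc a b) g)) :=
  (continuousOn_iff_continuous_domRestrict.1 hg).Icc_extend'

theorem exists_unique_eqOn_of_contraction {E : Type*} [NormedAddCommGroup E] [CompleteSpace E]
    {a b q : ℝ} (hab : a ≤ b) (F : (ℝ → E) → ℝ → E) (hq : q < 1)
    (hcongr : ∀ ω ω', EqOn ω ω' (Icc a b) → EqOn (F ω) (F ω') (Icc a b))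
    (hcont : ∀ ω, Continuous ω → ContinuousOn (F ω) (Icc a b))
    (hlip : ∀ ω ω', Continuous ω → Continuous ω' → ∀ d, (∀ x ∈ Icc a b, ‖ω x - ω' x‖ ≤ d) →
      ∀ x ∈ Icc a b, ‖F ω x - F ω' x‖ ≤ q * d) :
    ∃ u, (ContinuousOn u (Icc a b) ∧ ∀ x ∈ Icc a b, u x = F u x) ∧
      ∀ v, ContinuousOn v (Icc a b) → (∀ x ∈ Icc a b, v x = F v x) →
        ∀ x ∈ Icc a b, v x = u x := by
  let ext (ω : C(Icc a b, E)) : C(ℝ, E) := ContinuousMap.IccExtend hab ω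
  have ext_mem (ω : C(Icc a b, E)) {x} (hx : x ∈ Icc a b) : ext ω x = ω ⟨x, hx⟩ :=
    IccExtend_of_mem hab ω hx
  let T (ω : C(Icc a b, E)) : C(Icc a b, E) :=
    ⟨domRestrict _ (F (ext ω)),
      continuousOn_iff_continuous_domRestrict.1 (hcont _ (ext ω).continuous)⟩
  have hT : ContractingWith q.toNNReal T := by
    refine ⟨by simpa using hq, LipschitzWith.of_dist_le_mul fun ω ω' => ?_⟩
    refine (ContinuousMap.dist_le (by positivity)).2 fun x => ?_
    have hd : ∀ y ∈ Icc a b, ‖ext ω y - ext ω' y‖ ≤ dist ω ω' := fun y hy => by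
      rw [ext_mem ω hy, ext_mem ω' hy, ← dist_eq_norm]
      exact ContinuousMap.dist_apply_le_dist _
    rw [dist_eq_norm]
    exact (hlip _ _ (ext ω).continuous (ext ω').continuous _ hd x x.2).trans
      (mul_le_mul_of_nonneg_right (Real.le_coe_toNNReal q) dist_nonneg)
  set φ := ContractingWith.fixedPoint T hT
  have hφ : ∀ x ∈ Icc a b, ext φ x = F (ext φ) x := fun x hx => by
    rw [ext_mem φ hx]
    exact (DFunLike.congr_fun (ContractingWith.fixedPoint_isFixedPt hT) ⟨x, hx⟩).symm
  refine ⟨ext φ, ⟨(ext φ).continuous.continuousOn, hφ⟩, fun v hv hvF x hx => ?_⟩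
  let ν : C(Icc a b, E) := ⟨domRestrict _ v, continuousOn_iff_continuous_domRestrict.1 hv⟩
  have hν : EqOn (ext ν) v (Icc a b) := fun y hy => ext_mem ν hy
  have hTν : T ν = ν := ContinuousMap.ext fun y => by
    simp only [T, ContinuousMap.coe_mk, domRestrict_apply]
    rw [hcongr _ _ hν y.2, ← hvF y y.2]
    rfl
  rw [← hν hx, hT.fixedPoint_unique hTν]

section FractionalIntegral

variable {Ω : Type*} [NormedAddCommGroup Ω] [NormedSpace ℝ Ω] {δ t₀ t : ℝ}

theorem norm_fracInt_le {g : ℝ → Ω} {c : ℝ} (hδ : 0 < δ) (ht : t₀ ≤ t)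
    (hg : ∀ s ∈ Icc t₀ t, ‖g s‖ ≤ c) :
    ‖fracInt δ t₀ g t‖ ≤ c * (t - t₀) ^ δ / Real.Gamma (δ + 1) := by
  have hΓ := Real.Gamma_pos_of_pos hδ
  have hint : ‖∫ s in t₀..t, (t - s) ^ (δ - 1) • g s‖ ≤ c * ((t - t₀) ^ δ / δ) := by
    rw [← integral_rpow_comp_sub_left hδ, ← intervalIntegral.integral_const_mul]
    refine norm_integral_le_of_norm_le ht (ae_of_all _ fun s hs => ?_)
      ((intervalIntegrable_rpow_comp_sub_left hδ).const_mul c)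
    have hw : 0 ≤ (t - s) ^ (δ - 1) := Real.rpow_nonneg (sub_nonneg.2 hs.2) _
    rw [norm_smul, Real.norm_of_nonneg hw, mul_comm]
    exact mul_le_mul_of_nonneg_right (hg s (Ioc_subset_Icc_self hs)) hw
  rw [fracInt, norm_smul, Real.norm_of_nonneg (by positivity), Real.Gamma_add_one hδ.ne']
  calc 1 / Real.Gamma δ * ‖∫ s in t₀..t, (t - s) ^ (δ - 1) • g s‖
      ≤ 1 / Real.Gamma δ * (c * ((t - t₀) ^ δ / δ)) := by gcongr
    _ = c * (t - t₀) ^ δ / (δ * Real.Gamma δ) := by field_simp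

theorem fracInt_sub {g g' : ℝ → Ω} (hδ : 0 < δ) (hg : ContinuousOn g (uIcc t₀ t))
    (hg' : ContinuousOn g' (uIcc t₀ t)) :
    fracInt δ t₀ g t - fracInt δ t₀ g' t = fracInt δ t₀ (g - g') t := by
  rw [fracInt, fracInt, fracInt, ← smul_sub,
    ← integral_sub ((intervalIntegrable_rpow_comp_sub_left hδ).smul_continuousOn hg)
      ((intervalIntegrable_rpow_comp_sub_left hδ).smul_continuousOn hg')]
  simp only [Pi.sub_apply, smul_sub]

theorem fracInt_congr {g g' : ℝ → Ω} (ht : t₀ ≤ t) (h : EqOn g g' (Icc t₀ t)) :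
    fracInt δ t₀ g t = fracInt δ t₀ g' t := by
  rw [fracInt, fracInt, integral_congr fun s hs => ?_]
  rw [uIcc_of_le ht] at hs
  simp only [h hs]

end FractionalIntegral

theorem fArgs_congr {Ω : Type*} {r : ℕ} {b b' : Fin r → ℝ → ℝ} {ω ω' : ℝ → Ω} {s : ℝ}
    (hs : ω s = ω' s) (hb : ∀ i, ω (b i s) = ω' (b' i s)) : fArgs b ω s = fArgs b' ω' s := by
  simp only [fArgs, hs, hb]

theorem continuous_fArgs {Ω : Type*} [TopologicalSpace Ω] {r : ℕ} {b : Fin r → ℝ → ℝ}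
    {ω : ℝ → Ω} (hb : ∀ i, Continuous (b i)) (hω : Continuous ω) :
    Continuous (fArgs b ω) :=
  continuous_pi fun i => Fin.cases hω (fun j => hω.comp (hb j)) i

theorem sum_norm_fArgs_sub_le {Ω : Type*} [SeminormedAddCommGroup Ω] {r : ℕ}
    {b : Fin r → ℝ → ℝ} {ω ω' : ℝ → Ω} {s d : ℝ} (hs : ‖ω s - ω' s‖ ≤ d)
    (hb : ∀ i, ‖ω (b i s) - ω' (b i s)‖ ≤ d) :
    ∑ i, ‖fArgs b ω s i - fArgs b ω' s i‖ ≤ (r + 1) * d := by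
  have hsum := Finset.sum_le_card_nsmul Finset.univ _ d fun i _ => hb i
  simp only [Finset.card_univ, Fintype.card_fin, nsmul_eq_mul] at hsum
  simp only [Fin.sum_univ_succ, fArgs, Fin.cons_zero, Fin.cons_succ]
  linarith

section MildSolution

variable {Ω : Type*} [NormedAddCommGroup Ω] [NormedSpace ℝ Ω] {r p : ℕ} {t₀ a γ : ℝ}
  {B : Ω →L[ℝ] Ω} {u₀ : Ω} {tk Ck : Fin p → ℝ} {f : ℝ → (Fin (r + 1) → Ω) → Ω}
  {S K : ℝ → Ω →L[ℝ] Ω} {b : Fin r → ℝ → ℝ} {ω ω' : ℝ → Ω}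

theorem convMap_congr {K' : ℝ → Ω →L[ℝ] Ω} {b' : Fin r → ℝ → ℝ} {τ : ℝ}
    (hK : EqOn K K' (Icc 0 a)) (hb : ∀ i, EqOn (b i) (b' i) (Icc t₀ (t₀ + a)))
    (hbJ : ∀ i, MapsTo (b i) (Icc t₀ (t₀ + a)) (Icc t₀ (t₀ + a)))
    (hω : EqOn ω ω' (Icc t₀ (t₀ + a))) (hτ : τ ∈ Icc t₀ (t₀ + a)) :
    convMap K t₀ f b ω τ = convMap K' t₀ f b' ω' τ := by
  refine integral_congr fun s hs => ?_
  rw [uIcc_of_le hτ.1] at hs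
  have hsJ : s ∈ Icc t₀ (t₀ + a) := ⟨hs.1, hs.2.trans hτ.2⟩
  have hargs : fArgs b ω s = fArgs b' ω' s :=
    fArgs_congr (hω hsJ) fun i => hb i hsJ ▸ hω (hbJ i hsJ)
  simp only [hK ⟨sub_nonneg.2 hs.2, by linarith [hs.1, hτ.2]⟩, hargs]

theorem Fop_congr {S' K' : ℝ → Ω →L[ℝ] Ω} {b' : Fin r → ℝ → ℝ}
    (htkJ : ∀ k, tk k ∈ Icc t₀ (t₀ + a)) (hS : EqOn S S' (Icc 0 a)) (hK : EqOn K K' (Icc 0 a))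
    (hb : ∀ i, EqOn (b i) (b' i) (Icc t₀ (t₀ + a)))
    (hbJ : ∀ i, MapsTo (b i) (Icc t₀ (t₀ + a)) (Icc t₀ (t₀ + a)))
    (hω : EqOn ω ω' (Icc t₀ (t₀ + a))) :
    EqOn (Fop S K t₀ γ B u₀ tk Ck f b ω) (Fop S' K' t₀ γ B u₀ tk Ck f b' ω')
      (Icc t₀ (t₀ + a)) := by
  intro t ht
  have hconv : EqOn (convMap K t₀ f b ω) (convMap K' t₀ f b' ω') (Icc t₀ (t₀ + a)) :=
    fun τ => convMap_congr hK hb hbJ hω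
  have hfrac (k : Fin p) : fracInt (1 - γ) t₀ (convMap K t₀ f b ω) (tk k) =
      fracInt (1 - γ) t₀ (convMap K' t₀ f b' ω') (tk k) :=
    fracInt_congr (htkJ k).1 (hconv.mono (Icc_subset_Icc_right (htkJ k).2))
  simp only [Fop, hS ⟨sub_nonneg.2 ht.1, by linarith [ht.2]⟩, hconv ht, hfrac]

variable {M : ℝ}

theorem continuous_convMap_integrand (hK : ∀ x, Continuous fun t => K t x)
    (hKb : ∀ t, ‖K t‖ ≤ M) (hf : Continuous fun q : ℝ × (Fin (r + 1) → Ω) => f q.1 q.2)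
    (hb : ∀ i, Continuous (b i)) (hω : Continuous ω) :
    Continuous fun q : ℝ × ℝ => K (q.1 - q.2) (f q.2 (fArgs b ω q.2)) :=
  (continuous_clm_apply_of_norm_le hK hKb).comp ((continuous_fst.sub continuous_snd).prodMk
    (hf.comp (continuous_snd.prodMk ((continuous_fArgs hb hω).comp continuous_snd))))

theorem continuous_convMap (hK : ∀ x, Continuous fun t => K t x)
    (hKb : ∀ t, ‖K t‖ ≤ M) (hf : Continuous fun q : ℝ × (Fin (r + 1) → Ω) => f q.1 q.2)
    (hb : ∀ i, Continuous (b i)) (hω : Continuous ω) :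
    Continuous (convMap K t₀ f b ω) :=
  continuous_parametric_intervalIntegral_of_continuous
    (continuous_convMap_integrand hK hKb hf hb hω) continuous_id

theorem continuous_Fop (hS : ∀ x, Continuous fun t => S t x) (hK : ∀ x, Continuous fun t => K t x)
    (hKb : ∀ t, ‖K t‖ ≤ M) (hf : Continuous fun q : ℝ × (Fin (r + 1) → Ω) => f q.1 q.2)
    (hb : ∀ i, Continuous (b i)) (hω : Continuous ω) :
    Continuous (Fop S K t₀ γ B u₀ tk Ck f b ω) :=
  (((hS _).comp (continuous_sub_right t₀)).add (continuous_convMap hK hKb hf hb hω)).sub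
    ((hS _).comp (continuous_sub_right t₀))

variable {L d : ℝ}

theorem norm_convMap_sub_le {τ : ℝ} (hK : ∀ x, Continuous fun t => K t x)
    (hKb : ∀ t, ‖K t‖ ≤ M) (hf : Continuous fun q : ℝ × (Fin (r + 1) → Ω) => f q.1 q.2)
    (hb : ∀ i, Continuous (b i)) (hω : Continuous ω) (hω' : Continuous ω')
    (hbJ : ∀ i, MapsTo (b i) (Icc t₀ (t₀ + a)) (Icc t₀ (t₀ + a)))
    (hfLip : ∀ s ∈ Icc t₀ (t₀ + a), ∀ z zp : Fin (r + 1) → Ω,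
      ‖f s z - f s zp‖ ≤ L * ∑ i, ‖z i - zp i‖) (hL : 0 ≤ L)
    (hd : ∀ s ∈ Icc t₀ (t₀ + a), ‖ω s - ω' s‖ ≤ d) (hτ : τ ∈ Icc t₀ (t₀ + a)) :
    ‖convMap K t₀ f b ω τ - convMap K t₀ f b ω' τ‖ ≤ M * (L * ((r + 1) * d)) * a := by
  have hint {ω : ℝ → Ω} (hω : Continuous ω) :
      IntervalIntegrable (fun s => K (τ - s) (f s (fArgs b ω s))) volume t₀ τ :=
    ((continuous_convMap_integrand hK hKb hf hb hω).comp
      (continuous_const.prodMk continuous_id)).intervalIntegrable _ _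
  have hM : 0 ≤ M := (norm_nonneg _).trans (hKb 0)
  have hd0 : 0 ≤ d := (norm_nonneg _).trans (hd t₀ ⟨le_rfl, hτ.1.trans hτ.2⟩)
  rw [convMap, convMap, ← integral_sub (hint hω) (hint hω')]
  refine (intervalIntegral.norm_integral_le_of_norm_le_const
    (C := M * (L * ((r + 1) * d))) fun s hs => ?_).trans ?_
  · rw [uIoc_of_le hτ.1] at hs
    have hsJ : s ∈ Icc t₀ (t₀ + a) := ⟨hs.1.le, hs.2.trans hτ.2⟩
    rw [← map_sub]
    refine (K _).le_of_opNorm_le_of_le (hKb _) ((hfLip s hsJ _ _).trans ?_)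
    exact mul_le_mul_of_nonneg_left
      (sum_norm_fArgs_sub_le (hd s hsJ) fun i => hd _ (hbJ i hsJ)) hL
  · rw [abs_of_nonneg (sub_nonneg.2 hτ.1)]
    gcongr
    linarith [hτ.2]

theorem norm_Fop_sub_le {t : ℝ} (hSb : ∀ t ∈ Icc 0 a, ‖S t‖ ≤ M)
    (hK : ∀ x, Continuous fun t => K t x)
    (hKb : ∀ t, ‖K t‖ ≤ M) (hf : Continuous fun q : ℝ × (Fin (r + 1) → Ω) => f q.1 q.2)
    (hb : ∀ i, Continuous (b i)) (hω : Continuous ω) (hω' : Continuous ω') (hγ : γ < 1)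
    (htkJ : ∀ k, tk k ∈ Icc t₀ (t₀ + a))
    (hbJ : ∀ i, MapsTo (b i) (Icc t₀ (t₀ + a)) (Icc t₀ (t₀ + a)))
    (hfLip : ∀ s ∈ Icc t₀ (t₀ + a), ∀ z zp : Fin (r + 1) → Ω,
      ‖f s z - f s zp‖ ≤ L * ∑ i, ‖z i - zp i‖) (hL : 0 ≤ L)
    (hd : ∀ s ∈ Icc t₀ (t₀ + a), ‖ω s - ω' s‖ ≤ d) (ht : t ∈ Icc t₀ (t₀ + a)) :
    ‖Fop S K t₀ γ B u₀ tk Ck f b ω t - Fop S K t₀ γ B u₀ tk Ck f b ω' t‖ ≤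
      (r + 1) * L * M * a * (1 + M * ‖B‖ * (a ^ (1 - γ) / Real.Gamma (2 - γ)) * ∑ k, |Ck k|) *
        d := by
  set g := convMap K t₀ f b ω with hg
  set g' := convMap K t₀ f b ω' with hg'
  set c := M * (L * ((r + 1) * d)) * a
  set C := a ^ (1 - γ) / Real.Gamma (2 - γ) with hC
  have hconv : ∀ τ ∈ Icc t₀ (t₀ + a), ‖g τ - g' τ‖ ≤ c := fun τ =>
    norm_convMap_sub_le hK hKb hf hb hω hω' hbJ hfLip hL hd
  have hc : 0 ≤ c := (norm_nonneg _).trans (hconv t ht)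
  have hδ : 0 < 1 - γ := sub_pos.2 hγ
  have hfrac (k : Fin p) :
      ‖fracInt (1 - γ) t₀ g (tk k) - fracInt (1 - γ) t₀ g' (tk k)‖ ≤ c * C := by
    rw [fracInt_sub hδ (continuous_convMap hK hKb hf hb hω).continuousOn
      (continuous_convMap hK hKb hf hb hω').continuousOn]
    refine (norm_fracInt_le hδ (htkJ k).1 fun s hs =>
      hconv s ⟨hs.1, hs.2.trans (htkJ k).2⟩).trans ?_
    have hΓ := Real.Gamma_pos_of_pos (by linarith : 0 < 2 - γ)
    rw [show 1 - γ + 1 = 2 - γ by ring, mul_div_assoc, hC]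
    gcongr <;> linarith [(htkJ k).1, (htkJ k).2]
  have hsum : ‖∑ k, Ck k • (fracInt (1 - γ) t₀ g (tk k) - fracInt (1 - γ) t₀ g' (tk k))‖ ≤
      (∑ k, |Ck k|) * (c * C) := by
    refine (norm_sum_le _ _).trans ?_
    rw [Finset.sum_mul]
    refine Finset.sum_le_sum fun k _ => ?_
    rw [norm_smul, Real.norm_eq_abs]
    exact mul_le_mul_of_nonneg_left (hfrac k) (abs_nonneg _)
  calc ‖Fop S K t₀ γ B u₀ tk Ck f b ω t - Fop S K t₀ γ B u₀ tk Ck f b ω' t‖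
      = ‖(g t - g' t) - S (t - t₀) (B (∑ k, Ck k •
          (fracInt (1 - γ) t₀ g (tk k) - fracInt (1 - γ) t₀ g' (tk k))))‖ := by
        simp only [Fop, smul_sub, Finset.sum_sub_distrib, map_sub, ← hg, ← hg']
        abel_nf
    _ ≤ c + M * (‖B‖ * ((∑ k, |Ck k|) * (c * C))) :=
        norm_sub_le_of_le (hconv t ht) ((S _).le_of_opNorm_le_of_le
          (hSb _ ⟨sub_nonneg.2 ht.1, by linarith [ht.2]⟩) (B.le_opNorm_of_le hsum))
    _ = _ := by ring

end MildSolution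

theorem mild_solution_exists_unique_general {Ω : Type*} [NormedAddCommGroup Ω] [NormedSpace ℝ Ω]
    [CompleteSpace Ω] {r p : ℕ}
    (t₀ a γ M L : ℝ) (ha : 0 < a) (hγ1 : γ < 1)
    (S K : ℝ → Ω →L[ℝ] Ω)
    (hScont : ∀ x : Ω, ContinuousOn (fun t => S t x) (Icc 0 a))
    (hKcont : ∀ x : Ω, ContinuousOn (fun t => K t x) (Icc 0 a))
    (hSbd : ∀ t ∈ Icc (0 : ℝ) a, ‖S t‖ ≤ M)
    (hKbd : ∀ t ∈ Icc (0 : ℝ) a, ‖K t‖ ≤ M)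
    (tk : Fin p → ℝ)
    (htkJ : ∀ k, tk k ∈ Icc t₀ (t₀ + a))
    (Ck : Fin p → ℝ)
    (B : Ω →L[ℝ] Ω) (u₀ : Ω)
    (b : Fin r → ℝ → ℝ)
    (hbcont : ∀ i, ContinuousOn (b i) (Icc t₀ (t₀ + a)))
    (hbmaps : ∀ i, MapsTo (b i) (Icc t₀ (t₀ + a)) (Icc t₀ (t₀ + a)))
    (f : ℝ → (Fin (r + 1) → Ω) → Ω)
    (hfcont : Continuous fun q : ℝ × (Fin (r + 1) → Ω) => f q.1 q.2)
    (hfLip : ∀ s ∈ Icc t₀ (t₀ + a), ∀ z zp : Fin (r + 1) → Ω,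
      ‖f s z - f s zp‖ ≤ L * ∑ i, ‖z i - zp i‖)
    (hq : ((r : ℝ) + 1) * L * M * a *
        (1 + M * ‖B‖ * (a ^ (1 - γ) / Real.Gamma (2 - γ)) * ∑ k, |Ck k|) < 1) :
    ∃ u : ℝ → Ω,
      (ContinuousOn u (Icc t₀ (t₀ + a)) ∧
        ∀ t ∈ Icc t₀ (t₀ + a), u t = Fop S K t₀ γ B u₀ tk Ck f b u t) ∧
      ∀ v : ℝ → Ω, ContinuousOn v (Icc t₀ (t₀ + a)) →
        (∀ t ∈ Icc t₀ (t₀ + a), v t = Fop S K t₀ γ B u₀ tk Ck f b v t) →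
        ∀ t ∈ Icc t₀ (t₀ + a), v t = u t := by
  have hJ : t₀ ≤ t₀ + a := by linarith
  set S' := IccExtend ha.le (domRestrict (Icc 0 a) S)
  set K' := IccExtend ha.le (domRestrict (Icc 0 a) K)
  set b' : Fin r → ℝ → ℝ := fun i => IccExtend hJ (domRestrict _ (b i))
  have hFop' (ω : ℝ → Ω) : EqOn (Fop S K t₀ γ B u₀ tk Ck f b ω)
      (Fop S' K' t₀ γ B u₀ tk Ck f b' ω) (Icc t₀ (t₀ + a)) :=
    Fop_congr htkJ (eqOn_IccExtend_domRestrict _ S).symm (eqOn_IccExtend_domRestrict _ K).symm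
      (fun i => (eqOn_IccExtend_domRestrict hJ (b i)).symm) hbmaps (eqOn_refl _ _)
  have hS' (x : Ω) : Continuous fun t => S' t x :=
    (hScont x).continuous_IccExtend_domRestrict ha.le
  have hK' (x : Ω) : Continuous fun t => K' t x :=
    (hKcont x).continuous_IccExtend_domRestrict ha.le
  have hK'b (t : ℝ) : ‖K' t‖ ≤ M := hKbd _ (projIcc _ _ _ t).2
  have hb' (i : Fin r) : Continuous (b' i) := (hbcont i).continuous_IccExtend_domRestrict hJ
  have hfLip' : ∀ s ∈ Icc t₀ (t₀ + a), ∀ z zp : Fin (r + 1) → Ω,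
      ‖f s z - f s zp‖ ≤ max L 0 * ∑ i, ‖z i - zp i‖ := fun s hs z zp =>
    (hfLip s hs z zp).trans (by gcongr; exact le_max_left L 0)
  have hq' : ((r : ℝ) + 1) * max L 0 * M * a *
      (1 + M * ‖B‖ * (a ^ (1 - γ) / Real.Gamma (2 - γ)) * ∑ k, |Ck k|) < 1 := by
    rcases le_total 0 L with hL | hL
    · rwa [max_eq_left hL]
    · simp [max_eq_right hL]
  refine exists_unique_eqOn_of_contraction hJ _ hq'
    (fun ω ω' h => Fop_congr htkJ (eqOn_refl _ _) (eqOn_refl _ _) (fun i => eqOn_refl _ _) hbmaps h)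
    (fun ω hω => (continuous_Fop hS' hK' hK'b hfcont hb' hω).continuousOn.congr (hFop' ω))
    fun ω ω' hω hω' d hd t ht => ?_
  rw [hFop' ω ht, hFop' ω' ht]
  exact norm_Fop_sub_le (fun t _ => hSbd _ (projIcc _ _ _ t).2) hK' hK'b hfcont hb' hω hω' hγ1
    htkJ (fun i => (hbmaps i).congr (eqOn_IccExtend_domRestrict hJ (b i)).symm) hfLip'
    (le_max_right L 0) hd ht

/-- Existence and uniqueness of the mild solution: under the contraction condition
`q̃ = (r+1) L M a (1 + M ‖B‖ C̃ ∑_{k=1}^p |C_k|) < 1` with `C̃ = a^(1-γ)/Γ(2-γ)`,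
there is exactly one continuous `u : J → Ω` satisfying the mild-solution integral
equation `u(t) = S(t-t₀) B u₀ + ∫_{t₀}^t K(t-s) f(s, u(s), u(b₁(s)), …, u(b_r(s))) ds
 - S(t-t₀) B ∑_{k=1}^p C_k (I_{t₀⁺}^{1-γ} h_u)(t_k)` on `J`. -/
theorem mild_solution_exists_unique {Ω : Type*} [NormedAddCommGroup Ω] [NormedSpace ℝ Ω]
    [CompleteSpace Ω] {r p : ℕ}
    (t₀ a γ M L : ℝ) (ht₀ : 0 ≤ t₀) (ha : 0 < a) (hγ0 : 0 ≤ γ) (hγ1 : γ < 1)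
    (S K : ℝ → Ω →L[ℝ] Ω)
    (hScont : ∀ x : Ω, ContinuousOn (fun t => S t x) (Icc 0 a))
    (hKcont : ∀ x : Ω, ContinuousOn (fun t => K t x) (Icc 0 a))
    (hSbd : ∀ t ∈ Icc (0 : ℝ) a, ‖S t‖ ≤ M)
    (hKbd : ∀ t ∈ Icc (0 : ℝ) a, ‖K t‖ ≤ M)
    (tk : Fin p → ℝ) (htk : StrictMono tk)
    (htkJ : ∀ k, tk k ∈ Icc t₀ (t₀ + a))
    (Ck : Fin p → ℝ) (hCk : ∀ k, Ck k ≠ 0)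
    (B : Ω →L[ℝ] Ω) (u₀ : Ω)
    (b : Fin r → ℝ → ℝ)
    (hbcont : ∀ i, ContinuousOn (b i) (Icc t₀ (t₀ + a)))
    (hbmaps : ∀ i, MapsTo (b i) (Icc t₀ (t₀ + a)) (Icc t₀ (t₀ + a)))
    (f : ℝ → (Fin (r + 1) → Ω) → Ω)
    (hfcont : Continuous fun q : ℝ × (Fin (r + 1) → Ω) => f q.1 q.2)
    (hfLip : ∀ s ∈ Icc t₀ (t₀ + a), ∀ z zp : Fin (r + 1) → Ω,
      ‖f s z - f s zp‖ ≤ L * ∑ i, ‖z i - zp i‖)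
    (hq : ((r : ℝ) + 1) * L * M * a *
        (1 + M * ‖B‖ * (a ^ (1 - γ) / Real.Gamma (2 - γ)) * ∑ k, |Ck k|) < 1) :
    ∃ u : ℝ → Ω,
      (ContinuousOn u (Icc t₀ (t₀ + a)) ∧
        ∀ t ∈ Icc t₀ (t₀ + a), u t = Fop S K t₀ γ B u₀ tk Ck f b u t) ∧
      ∀ v : ℝ → Ω, ContinuousOn v (Icc t₀ (t₀ + a)) →
        (∀ t ∈ Icc t₀ (t₀ + a), v t = Fop S K t₀ γ B u₀ tk Ck f b v t) →
        ∀ t ∈ Icc t₀ (t₀ + a), v t = u t :=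
  mild_solution_exists_unique_general t₀ a γ M L ha hγ1 S K hScont hKcont hSbd hKbd tk htkJ Ck B u₀
    b hbcont hbmaps f hfcont hfLip hq
end

section
/- With the data of the nonlocal fractional evolution setup, let Ŝ_k := (1/Γ(1−γ)) ∫_{t₀}^{t_k} (t_k − s)^{−γ} S(s − t₀) ds, and assume the bounded operator B is a two-sided inverse of I + Σ_{k=1}^p C_k Ŝ_k. Suppose u : J → Ω is continuous and there exists x ∈ Ω with u(t) = S(t−t₀) x + ∫_{t₀}^t K(t−s) f(s,u(s),u(b₁(s)),…,u(b_r(s))) ds for all t ∈ J, and that u satisfies the nonlocal condition x + Σ_{k=1}^p C_k (I_{t₀⁺}^{1−γ} u)(t_k) = u₀. Then x = B u₀ − B Σ_{k=1}^p C_k (I_{t₀⁺}^{1−γ} h_u)(t_k), where h_u(τ) := ∫_{t₀}^τ K(τ−s) f(s,u(s),u(b₁(s)),…,u(b_r(s))) ds; consequently u satisfies the mild-solution integral equation u(t) = S(t−t₀)Bu₀ + ∫_{t₀}^t K(t−s) f(s,u(s),u(b₁(s)),…,u(b_r(s))) ds − S(t−t₀) B Σ_{k=1}^p C_k (I_{t₀⁺}^{1−γ}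 h_u)(t_k) for all t ∈ J, i.e., every classical solution (represented by the variation-of-constants formula) is a mild solution. -/
open Set intervalIntegral

/-!
On `[t₀, t_k]` the solution splits as `u = S(· - t₀) x + h_u` into two continuous pieces, so by
linearity of the fractional integral the nonlocal condition reads
`(I + ∑ C_k Ŝ_k) x = u₀ - ∑ C_k (I^{1-γ} h_u)(t_k)`. Applying the left inverse `B` identifies `x`,
and substituting it into the variation-of-constants formula gives the mild-solution equation.
-/

open MeasureTheory

section FracInt

variable {Ω : Type*} [NormedAddCommGroup Ω] [NormedSpace ℝ Ω]

lemma intervalIntegrable_rpow_sub_smul {δ t₀ T : ℝ} (hδ : 0 < δ) {g : ℝ → Ω}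
    (hg : ContinuousOn g (uIcc t₀ T)) :
    IntervalIntegrable (fun s => (T - s) ^ (δ - 1) • g s) volume t₀ T := by
  have hpow : IntervalIntegrable (fun s => (T - s) ^ (δ - 1)) volume t₀ T := by
    simpa using ((intervalIntegrable_rpow' (a := 0) (b := T - t₀)
      (by linarith : -1 < δ - 1)).comp_sub_left T).symm
  rw [intervalIntegrable_iff] at hpow ⊢
  exact hpow.smul_continuousOn_of_subset hg measurableSet_uIoc isCompact_uIcc uIoc_subset_uIcc

lemma fracInt_congr_s9 {δ t₀ T : ℝ} {g₁ g₂ : ℝ → Ω} (h : EqOn g₁ g₂ (uIcc t₀ T)) :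
    fracInt δ t₀ g₁ T = fracInt δ t₀ g₂ T := by
  unfold fracInt
  congr 1
  exact integral_congr fun s hs => by simp only [h hs]

lemma fracInt_add {δ t₀ T : ℝ} (hδ : 0 < δ) {g₁ g₂ : ℝ → Ω}
    (hg₁ : ContinuousOn g₁ (uIcc t₀ T)) (hg₂ : ContinuousOn g₂ (uIcc t₀ T)) :
    fracInt δ t₀ (g₁ + g₂) T = fracInt δ t₀ g₁ T + fracInt δ t₀ g₂ T := by
  simp only [fracInt, Pi.add_apply, smul_add,
    integral_add (intervalIntegrable_rpow_sub_smul hδ hg₁) (intervalIntegrable_rpow_sub_smul hδ hg₂)]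

lemma fracInt_eq_add_of_eqOn {δ t₀ T : ℝ} (hδ : 0 < δ) {u g h : ℝ → Ω}
    (hu : ContinuousOn u (uIcc t₀ T)) (hg : ContinuousOn g (uIcc t₀ T))
    (hsplit : EqOn u (g + h) (uIcc t₀ T)) :
    fracInt δ t₀ u T = fracInt δ t₀ g T + fracInt δ t₀ h T := by
  have hh : ContinuousOn h (uIcc t₀ T) :=
    (hu.sub hg).congr fun s hs => by simp [hsplit hs]
  rw [fracInt_congr_s9 hsplit, fracInt_add hδ hg hh]

end FracInt

lemma eq_sub_of_nonlocal {Ω : Type*} [NormedAddCommGroup Ω] [NormedSpace ℝ Ω] {p : ℕ}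
    {Shat : Fin p → Ω →L[ℝ] Ω} {Ck : Fin p → ℝ} {B : Ω →L[ℝ] Ω}
    (hB : B.comp (ContinuousLinearMap.id ℝ Ω + ∑ k, Ck k • Shat k) = ContinuousLinearMap.id ℝ Ω)
    {x u₀ : Ω} {v w : Fin p → Ω} (hvw : ∀ k, v k = Shat k x + w k)
    (hnonlocal : x + ∑ k, Ck k • v k = u₀) :
    x = B u₀ - B (∑ k, Ck k • w k) := by
  have hx : (ContinuousLinearMap.id ℝ Ω + ∑ k, Ck k • Shat k) x = u₀ - ∑ k, Ck k • w k := by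
    rw [← hnonlocal]
    simp only [hvw, smul_add, Finset.sum_add_distrib, add_apply,
      ContinuousLinearMap.id_apply, sum_apply, smul_apply]
    abel
  rw [← map_sub, ← hx, ← ContinuousLinearMap.comp_apply, hB, ContinuousLinearMap.id_apply]

theorem classical_solution_is_mild_general {Ω : Type*} [NormedAddCommGroup Ω] [NormedSpace ℝ Ω]
    {r p : ℕ}
    (t₀ a γ : ℝ) (hγ1 : γ < 1)
    (S K : ℝ → Ω →L[ℝ] Ω)
    (hScont : ∀ x : Ω, ContinuousOn (fun t => S t x) (Icc 0 a))
    (tk : Fin p → ℝ)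
    (htkJ : ∀ k, tk k ∈ Icc t₀ (t₀ + a))
    (Ck : Fin p → ℝ)
    (B : Ω →L[ℝ] Ω) (u₀ : Ω)
    (b : Fin r → ℝ → ℝ)
    (f : ℝ → (Fin (r + 1) → Ω) → Ω)
    (Shat : Fin p → Ω →L[ℝ] Ω)
    (hShat : ∀ (k : Fin p) (x : Ω),
      Shat k x = fracInt (1 - γ) t₀ (fun s => S (s - t₀) x) (tk k))
    (hB₁ : B.comp (ContinuousLinearMap.id ℝ Ω + ∑ k, Ck k • Shat k) =
      ContinuousLinearMap.id ℝ Ω)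
    (u : ℝ → Ω) (hucont : ContinuousOn u (Icc t₀ (t₀ + a)))
    (x : Ω)
    (hu : ∀ t ∈ Icc t₀ (t₀ + a), u t = S (t - t₀) x + convMap K t₀ f b u t)
    (hnonlocal : x + ∑ k, Ck k • fracInt (1 - γ) t₀ u (tk k) = u₀) :
    x = B u₀ - B (∑ k, Ck k • fracInt (1 - γ) t₀ (convMap K t₀ f b u) (tk k)) ∧
    ∀ t ∈ Icc t₀ (t₀ + a), u t = Fop S K t₀ γ B u₀ tk Ck f b u t := by
  have hScont' : ContinuousOn (fun s => S (s - t₀) x) (Icc t₀ (t₀ + a)) :=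
    (hScont x).comp (continuous_sub_right t₀).continuousOn fun s hs =>
      ⟨by linarith [hs.1], by linarith [hs.2]⟩
  have hsub : ∀ k, uIcc t₀ (tk k) ⊆ Icc t₀ (t₀ + a) := fun k => by
    rw [uIcc_of_le (htkJ k).1]
    exact Icc_subset_Icc le_rfl (htkJ k).2
  have hx := eq_sub_of_nonlocal hB₁ (fun k => by
    rw [hShat]
    exact fracInt_eq_add_of_eqOn (by linarith) (hucont.mono (hsub k)) (hScont'.mono (hsub k))
      fun s hs => hu s (hsub k hs)) hnonlocal
  refine ⟨hx, fun t ht => ?_⟩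
  rw [hu t ht, hx]
  simp only [Fop, map_sub]
  abel

/-- Every classical solution (represented by the variation-of-constants formula with the
nonlocal condition) is a mild solution: if `u` is continuous on `J`, satisfies
`u(t) = S(t-t₀) x + ∫_{t₀}^t K(t-s) f(s, u(s), u(b₁(s)), …, u(b_r(s))) ds` on `J` and
the nonlocal condition `x + ∑_k C_k (I_{t₀⁺}^{1-γ} u)(t_k) = u₀`, where `B` is a
two-sided inverse of `I + ∑_k C_k Ŝ_k` and
`Ŝ_k x = (I_{t₀⁺}^{1-γ}[s ↦ S(s-t₀) x])(t_k)`, then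
`x = B u₀ - B ∑_k C_k (I_{t₀⁺}^{1-γ} h_u)(t_k)` and consequently `u` satisfies the
mild-solution integral equation on `J`. -/
theorem classical_solution_is_mild {Ω : Type*} [NormedAddCommGroup Ω] [NormedSpace ℝ Ω]
    [CompleteSpace Ω] {r p : ℕ}
    (t₀ a γ M : ℝ) (ht₀ : 0 ≤ t₀) (ha : 0 < a) (hγ0 : 0 ≤ γ) (hγ1 : γ < 1)
    (S K : ℝ → Ω →L[ℝ] Ω)
    (hScont : ∀ x : Ω, ContinuousOn (fun t => S t x) (Icc 0 a))
    (hKcont : ∀ x : Ω, ContinuousOn (fun t => K t x) (Icc 0 a))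
    (hSbd : ∀ t ∈ Icc (0 : ℝ) a, ‖S t‖ ≤ M)
    (hKbd : ∀ t ∈ Icc (0 : ℝ) a, ‖K t‖ ≤ M)
    (tk : Fin p → ℝ) (htk : StrictMono tk)
    (htkJ : ∀ k, tk k ∈ Icc t₀ (t₀ + a))
    (Ck : Fin p → ℝ) (hCk : ∀ k, Ck k ≠ 0)
    (B : Ω →L[ℝ] Ω) (u₀ : Ω)
    (b : Fin r → ℝ → ℝ)
    (hbcont : ∀ i, ContinuousOn (b i) (Icc t₀ (t₀ + a)))
    (hbmaps : ∀ i, MapsTo (b i) (Icc t₀ (t₀ + a)) (Icc t₀ (t₀ + a)))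
    (f : ℝ → (Fin (r + 1) → Ω) → Ω)
    (hfcont : Continuous fun q : ℝ × (Fin (r + 1) → Ω) => f q.1 q.2)
    (Shat : Fin p → Ω →L[ℝ] Ω)
    (hShat : ∀ (k : Fin p) (x : Ω),
      Shat k x = fracInt (1 - γ) t₀ (fun s => S (s - t₀) x) (tk k))
    (hB₁ : B.comp (ContinuousLinearMap.id ℝ Ω + ∑ k, Ck k • Shat k) =
      ContinuousLinearMap.id ℝ Ω)
    (hB₂ : (ContinuousLinearMap.id ℝ Ω + ∑ k, Ck k • Shat k).comp B =
      ContinuousLinearMap.id ℝ Ω)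
    (u : ℝ → Ω) (hucont : ContinuousOn u (Icc t₀ (t₀ + a)))
    (x : Ω)
    (hu : ∀ t ∈ Icc t₀ (t₀ + a), u t = S (t - t₀) x + convMap K t₀ f b u t)
    (hnonlocal : x + ∑ k, Ck k • fracInt (1 - γ) t₀ u (tk k) = u₀) :
    x = B u₀ - B (∑ k, Ck k • fracInt (1 - γ) t₀ (convMap K t₀ f b u) (tk k)) ∧
    ∀ t ∈ Icc t₀ (t₀ + a), u t = Fop S K t₀ γ B u₀ tk Ck f b u t :=
  classical_solution_is_mild_general t₀ a γ hγ1 S K hScont tk htkJ Ck B u₀ b f Shat hShat hB₁ u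
    hucont x hu hnonlocal
end
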